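/- If v ≡ 10 (mod 12), then no minimum uniform nested SQS(v) exists; hence a minimum uniform nested SQS(v) can exist only when v ≡ 4 (mod 12). -/

import Mathlib

set_option linter.unusedSectionVars false
set_option maxHeartbeats 1000000


open Finset

/-- A nested Steiner quadruple system on a point set `α`: a collection of blocks of
size 4 such that every 3-subset lies in exactly one block, together with a partition
of each block into two pairs (recorded by `pair1` and `pair2`). -/
structure NestedSQS (α : Type*) [DecidableEq α] where
  blocks : Finset (Finset α)
  card4 : ∀ b ∈ blocks, b.card = 4
  cover : ∀ t : Finset α, t.card = 3 → ∃! b, b ∈ blocks ∧ t ⊆ b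
  pair1 : Finset α → Finset α
  pair2 : Finset α → Finset α
  partition : ∀ b ∈ blocks, (pair1 b).card = 2 ∧ (pair2 b).card = 2 ∧
    Disjoint (pair1 b) (pair2 b) ∧ pair1 b ∪ pair2 b = b

variable {α : Type*} [DecidableEq α] [Fintype α]

/-- The multiplicity of a pair `p`: the number of blocks whose partition contains `p`. -/
def NestedSQS.mult (S : NestedSQS α) (p : Finset α) : ℕ :=
  (S.blocks.filter fun b => S.pair1 b = p ∨ S.pair2 b = p).card

/-- The nested design pairs (ND-pairs) of a nested SQS. -/
def NestedSQS.NDpairs (S : NestedSQS α) : Finset (Finset α) :=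
  S.blocks.image S.pair1 ∪ S.blocks.image S.pair2

lemma card_triple {x y z : α} (hxy : x ≠ y) (hxz : x ≠ z) (hyz : y ≠ z) :
    ({x, y, z} : Finset α).card = 3 := by
  rw [card_insert_of_notMem (by simp [hxy, hxz]),
    card_insert_of_notMem (by simp [hyz]), card_singleton]

noncomputable def blkOf (S : NestedSQS α) (x y z : α) : Finset α :=
  if h : ({x, y, z} : Finset α).card = 3 then (S.cover _ h).choose else ∅

lemma blkOf_spec (S : NestedSQS α) {x y z : α} (hxy : x ≠ y) (hxz : x ≠ z) (hyz : y ≠ z) :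
    blkOf S x y z ∈ S.blocks ∧ ({x, y, z} : Finset α) ⊆ blkOf S x y z := by
  rw [blkOf, dif_pos (card_triple hxy hxz hyz)]
  exact (S.cover _ (card_triple hxy hxz hyz)).choose_spec.1

lemma blkOf_eq (S : NestedSQS α) {x y z : α} (hxy : x ≠ y) (hxz : x ≠ z) (hyz : y ≠ z)
    {b : Finset α} (hb : b ∈ S.blocks) (hsub : ({x, y, z} : Finset α) ⊆ b) :
    b = blkOf S x y z := by
  rw [blkOf, dif_pos (card_triple hxy hxz hyz)]
  exact (S.cover _ (card_triple hxy hxz hyz)).choose_spec.2 b ⟨hb, hsub⟩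

/-- Counting blocks through a pair of points. -/
lemma pairCount (S : NestedSQS α) {x y : α} (hxy : x ≠ y) :
    2 * (S.blocks.filter fun b => x ∈ b ∧ y ∈ b).card = Fintype.card α - 2 := by
  classical
  have hmap : ∀ t ∈ (univ.erase y).erase x,
      blkOf S x y t ∈ S.blocks.filter fun b => x ∈ b ∧ y ∈ b := by
    intro t ht
    have htx : x ≠ t := (mem_erase.1 ht).1.symm
    have hty : y ≠ t := (mem_erase.1 (mem_of_mem_erase ht)).1.symm
    obtain ⟨h1, h2⟩ := blkOf_spec S hxy htx hty
    refine mem_filter.2 ⟨h1, h2 (by simp), h2 (by simp)⟩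
  have hcard := card_eq_sum_card_fiberwise hmap
  have hfib : ∀ b ∈ S.blocks.filter fun b => x ∈ b ∧ y ∈ b,
      (((univ.erase y).erase x).filter fun t => blkOf S x y t = b).card = 2 := by
    intro b hb
    obtain ⟨hbB, hxb, hyb⟩ := mem_filter.1 hb
    have : (((univ.erase y).erase x).filter fun t => blkOf S x y t = b)
        = (b.erase y).erase x := by
      ext t
      simp only [mem_filter, mem_erase, mem_univ, and_true]
      constructor
      · rintro ⟨⟨htx, hty⟩, hblk⟩
        refine ⟨htx, hty, ?_⟩
        have := (blkOf_spec S hxy (Ne.symm htx) (Ne.symm hty)).2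
        rw [hblk] at this
        exact this (by simp)
      · rintro ⟨htx, hty, htb⟩
        refine ⟨⟨htx, hty⟩, ?_⟩
        exact (blkOf_eq S hxy (Ne.symm htx) (Ne.symm hty) hbB
          (insert_subset hxb (insert_subset hyb (singleton_subset_iff.2 htb)))).symm
    rw [this, card_erase_of_mem (mem_erase.2 ⟨hxy, hxb⟩), card_erase_of_mem hyb,
      S.card4 b hbB]
  rw [Finset.sum_congr rfl hfib, sum_const, smul_eq_mul] at hcard
  have : ((univ.erase y).erase x).card = Fintype.card α - 2 := by
    rw [card_erase_of_mem (mem_erase.2 ⟨hxy, mem_univ x⟩), card_erase_of_mem (mem_univ y),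
      card_univ]
    omega
  omega

lemma ND_card (S : NestedSQS α) {p : Finset α} (hp : p ∈ S.NDpairs) : p.card = 2 := by
  rcases mem_union.1 hp with h | h <;>
  · obtain ⟨b, hb, rfl⟩ := mem_image.1 h
    first
    | exact (S.partition b hb).1
    | exact (S.partition b hb).2.1

lemma partner (S : NestedSQS α) {b : Finset α} (hb : b ∈ S.blocks) {x : α} (hx : x ∈ b) :
    ∃ c ∈ b, c ≠ x ∧ ({x, c} : Finset α) ∈ S.NDpairs := by
  obtain ⟨h1, h2, hdisj, huni⟩ := S.partition b hb
  rw [← huni, mem_union] at hx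
  rcases hx with hx | hx
  · obtain ⟨a, c, hac, habc⟩ := card_eq_two.1 h1
    have hnd : S.pair1 b ∈ S.NDpairs := mem_union_left _ (mem_image_of_mem _ hb)
    have hsub : S.pair1 b ⊆ b := subset_union_left.trans huni.le
    rw [habc] at hx hnd hsub
    rcases mem_insert.1 hx with rfl | hx
    · exact ⟨c, hsub (by simp), hac.symm, hnd⟩
    · rw [mem_singleton] at hx; subst hx
      rw [pair_comm] at hnd
      exact ⟨a, hsub (by simp), hac, hnd⟩
  · obtain ⟨a, c, hac, habc⟩ := card_eq_two.1 h2
    have hnd : S.pair2 b ∈ S.NDpairs := mem_union_right _ (mem_image_of_mem _ hb)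
    have hsub : S.pair2 b ⊆ b := subset_union_right.trans huni.le
    rw [habc] at hx hnd hsub
    rcases mem_insert.1 hx with rfl | hx
    · exact ⟨c, hsub (by simp), hac.symm, hnd⟩
    · rw [mem_singleton] at hx; subst hx
      rw [pair_comm] at hnd
      exact ⟨a, hsub (by simp), hac, hnd⟩

lemma arc_bound (S : NestedSQS α) (hv : Fintype.card α % 12 = 10) (x : α) :
    2 * ((univ.erase x).filter fun y => ({x, y} : Finset α) ∉ S.NDpairs).card
      ≤ Fintype.card α - 2 := by
  classical
  set v := Fintype.card α with hvdef
  set A := (univ.erase x).filter fun y => ({x, y} : Finset α) ∉ S.NDpairs with hA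
  have hAmem : ∀ y ∈ A, y ≠ x ∧ ({x, y} : Finset α) ∉ S.NDpairs := by
    intro y hy
    have := mem_filter.1 hy
    exact ⟨(mem_erase.1 this.1).1, this.2⟩
  -- every block through x contains a point ≠ x outside A
  have hout : ∀ b ∈ S.blocks, x ∈ b → ∃ c ∈ b, c ≠ x ∧ c ∉ A := by
    intro b hb hx
    obtain ⟨c, hcb, hcx, hnd⟩ := partner S hb hx
    exact ⟨c, hcb, hcx, fun hcA => (hAmem c hcA).2 hnd⟩
  have hinj : ∀ y ∈ A, Set.InjOn (fun z => blkOf S x y z) (A.erase y) := by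
    intro y hy z hz z' hz' heq
    by_contra hne
    have hzA := mem_of_mem_erase (Finset.mem_coe.1 hz)
    have hz'A := mem_of_mem_erase (Finset.mem_coe.1 hz')
    have hzy : z ≠ y := (mem_erase.1 (Finset.mem_coe.1 hz)).1
    have hz'y : z' ≠ y := (mem_erase.1 (Finset.mem_coe.1 hz')).1
    have hyx := (hAmem y hy).1
    have hzx := (hAmem z hzA).1
    have hz'x := (hAmem z' hz'A).1
    obtain ⟨hbB, hbsub⟩ := blkOf_spec S hyx.symm hzx.symm hzy.symm
    obtain ⟨hbB', hbsub'⟩ := blkOf_spec S hyx.symm hz'x.symm hz'y.symm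
    simp only at heq
    rw [← heq] at hbsub'
    set b := blkOf S x y z with hb
    have hsub4 : ({x, y, z, z'} : Finset α) ⊆ b := by
      refine insert_subset (hbsub (by simp)) (insert_subset (hbsub (by simp))
        (insert_subset (hbsub (by simp)) (singleton_subset_iff.2 (hbsub' (by simp)))))
    have hcard4 : ({x, y, z, z'} : Finset α).card = 4 := by
      rw [card_insert_of_notMem (by simp [hyx.symm, hzx.symm, hz'x.symm, Ne.symm]),
        card_triple hzy.symm hz'y.symm hne]
    have hbeq : b = ({x, y, z, z'} : Finset α) :=
      (eq_of_subset_of_card_le hsub4 (by rw [S.card4 b hbB, hcard4])).symm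
    obtain ⟨c, hcb, hcx, hcA⟩ := hout b hbB (hbsub (by simp))
    rw [hbeq] at hcb
    simp only [mem_insert, mem_singleton] at hcb
    rcases hcb with rfl | rfl | rfl | rfl
    · exact hcx rfl
    · exact hcA hy
    · exact hcA hzA
    · exact hcA hz'A
  have hmapsy : ∀ y ∈ A, ∀ z ∈ A.erase y,
      blkOf S x y z ∈ S.blocks.filter fun b => x ∈ b ∧ y ∈ b := by
    intro y hy z hz
    have hyx := (hAmem y hy).1
    have hzx := (hAmem z (mem_of_mem_erase hz)).1
    have hzy : z ≠ y := (mem_erase.1 hz).1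
    obtain ⟨h1, h2⟩ := blkOf_spec S hyx.symm hzx.symm hzy.symm
    exact mem_filter.2 ⟨h1, h2 (by simp), h2 (by simp)⟩
  rcases A.eq_empty_or_nonempty with he | ⟨y0, hy0⟩
  · rw [he]; simp
  have hcardle : ∀ y ∈ A, A.card - 1 ≤ (S.blocks.filter fun b => x ∈ b ∧ y ∈ b).card := by
    intro y hy
    have := Finset.card_le_card_of_injOn _ (hmapsy y hy) (hinj y hy)
    rwa [card_erase_of_mem hy] at this
  by_contra hcon
  have hApos : 1 ≤ A.card := card_pos.2 ⟨y0, hy0⟩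
  have h2a : 2 * A.card = v := by
    have h1 := hcardle y0 hy0
    have h2 := pairCount S (hAmem y0 hy0).1.symm
    omega
  -- full surjectivity onto blocks through {x,y}
  have hfull : ∀ y ∈ A, ∀ b ∈ S.blocks, x ∈ b → y ∈ b → ∃ z ∈ A.erase y, z ∈ b := by
    intro y hy b hb hxb hyb
    have himg : (A.erase y).image (fun z => blkOf S x y z)
        = (S.blocks.filter fun b => x ∈ b ∧ y ∈ b) := by
      apply eq_of_subset_of_card_le
      · intro c hc
        obtain ⟨z, hz, hzeq⟩ := mem_image.1 hc
        exact hzeq ▸ hmapsy y hy z hz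
      · rw [Finset.card_image_of_injOn (hinj y hy), card_erase_of_mem hy]
        have h2 := pairCount S (hAmem y hy).1.symm
        omega
    have hbmem : b ∈ (A.erase y).image (fun z => blkOf S x y z) := by
      rw [himg]; exact mem_filter.2 ⟨hb, hxb, hyb⟩
    obtain ⟨z, hz, hzblk⟩ := mem_image.1 hbmem
    refine ⟨z, hz, ?_⟩
    have hyx := (hAmem y hy).1
    have hzx := (hAmem z (mem_of_mem_erase hz)).1
    have hzy : z ≠ y := (mem_erase.1 hz).1
    have := (blkOf_spec S hyx.symm hzx.symm hzy.symm).2 (show z ∈ ({x, y, z} : Finset α) by simp)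
    rwa [hzblk] at this
  -- pick p outside A ∪ {x}
  have hex : ∃ p, p ∉ insert x A := by
    by_contra h
    push_neg at h
    have hsub : (univ : Finset α) ⊆ insert x A := fun p _ => h p
    have h1 := card_le_card hsub
    have h2 := card_insert_le x A
    rw [card_univ, ← hvdef] at h1
    omega
  obtain ⟨p, hp⟩ := hex
  have hpx : p ≠ x := fun h => hp (h ▸ mem_insert_self x A)
  have hpA : p ∉ A := fun h => hp (mem_insert_of_mem h)
  have hmapp : ∀ y ∈ A, blkOf S x p y ∈ S.blocks.filter fun b => x ∈ b ∧ p ∈ b := by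
    intro y hy
    have hyx := (hAmem y hy).1
    have hyp : y ≠ p := fun h => hpA (h ▸ hy)
    obtain ⟨h1, h2⟩ := blkOf_spec S hpx.symm hyx.symm hyp.symm
    exact mem_filter.2 ⟨h1, h2 (by simp), h2 (by simp)⟩
  have hsum := Finset.card_eq_sum_card_fiberwise hmapp
  have hfib : ∀ b ∈ S.blocks.filter fun b => x ∈ b ∧ p ∈ b,
      2 ∣ (A.filter fun y => blkOf S x p y = b).card := by
    intro b hb
    obtain ⟨hbB, hxb, hpb⟩ := mem_filter.1 hb
    rcases (A.filter fun y => blkOf S x p y = b).eq_empty_or_nonempty with he | ⟨s, hs⟩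
    · rw [he]; simp
    obtain ⟨hsA, hsblk⟩ := mem_filter.1 hs
    have hsx := (hAmem s hsA).1
    have hsp : s ≠ p := fun h => hpA (h ▸ hsA)
    have hsb : s ∈ b := by
      have := (blkOf_spec S hpx.symm hsx.symm hsp.symm).2
        (show s ∈ ({x, p, s} : Finset α) by simp)
      rwa [hsblk] at this
    obtain ⟨z, hz, hzb⟩ := hfull s hsA b hbB hxb hsb
    have hfeq : (A.filter fun y => blkOf S x p y = b) = A.filter (· ∈ b) := by
      ext y
      simp only [mem_filter, and_congr_right_iff]
      intro hyA
      have hyx := (hAmem y hyA).1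
      have hyp : y ≠ p := fun h => hpA (h ▸ hyA)
      constructor
      · intro h
        have := (blkOf_spec S hpx.symm hyx.symm hyp.symm).2
          (show y ∈ ({x, p, y} : Finset α) by simp)
        rwa [h] at this
      · intro h
        exact (blkOf_eq S hpx.symm hyx.symm hyp.symm hbB
          (insert_subset hxb (insert_subset hpb (singleton_subset_iff.2 h)))).symm
    rw [hfeq]
    have hle : A.filter (· ∈ b) ⊆ (b.erase p).erase x := by
      intro y hy
      obtain ⟨hyA, hyb⟩ := mem_filter.1 hy
      exact mem_erase.2 ⟨(hAmem y hyA).1, mem_erase.2 ⟨fun h => hpA (h ▸ hyA), hyb⟩⟩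
    have hub : ((b.erase p).erase x).card = 2 := by
      rw [card_erase_of_mem (mem_erase.2 ⟨hpx.symm, hxb⟩), card_erase_of_mem hpb,
        S.card4 b hbB]
    have hge : ({s, z} : Finset α) ⊆ A.filter (· ∈ b) := by
      intro w hw
      rcases mem_insert.1 hw with rfl | hw
      · exact mem_filter.2 ⟨hsA, hsb⟩
      · rw [mem_singleton] at hw; subst hw
        exact mem_filter.2 ⟨mem_of_mem_erase hz, hzb⟩
    have hcs : ({s, z} : Finset α).card = 2 := card_pair ((mem_erase.1 hz).1.symm)
    have h1 := card_le_card hle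
    have h2 := card_le_card hge
    rw [hub] at h1
    rw [hcs] at h2
    have : (A.filter (· ∈ b)).card = 2 := le_antisymm h1 h2
    rw [this]
  have hdvd : 2 ∣ A.card := hsum ▸ Finset.dvd_sum hfib
  omega

lemma degEq (S : NestedSQS α) (x : α) :
    ((univ.erase x).filter fun y => ({x, y} : Finset α) ∈ S.NDpairs).card
      = (S.NDpairs.filter fun p => x ∈ p).card := by
  apply Finset.card_bij (fun y _ => ({x, y} : Finset α))
  · intro y hy
    exact mem_filter.2 ⟨(mem_filter.1 hy).2, by simp⟩
  · intro y hy y' hy' heq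
    have hyx : y ≠ x := (mem_erase.1 (mem_filter.1 hy).1).1
    have : y ∈ ({x, y'} : Finset α) := heq ▸ (by simp : y ∈ ({x, y} : Finset α))
    rcases mem_insert.1 this with h | h
    · exact absurd h hyx
    · exact mem_singleton.1 h
  · intro p hp
    obtain ⟨hpND, hxp⟩ := mem_filter.1 hp
    obtain ⟨a, c, hac, rfl⟩ := card_eq_two.1 (ND_card S hpND)
    rcases mem_insert.1 hxp with rfl | hxp
    · exact ⟨c, mem_filter.2 ⟨mem_erase.2 ⟨hac.symm, mem_univ c⟩, hpND⟩, rfl⟩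
    · rw [mem_singleton] at hxp; subst hxp
      refine ⟨a, mem_filter.2 ⟨mem_erase.2 ⟨hac, mem_univ a⟩, ?_⟩, pair_comm x a⟩
      rwa [pair_comm x a]

lemma sumDeg (S : NestedSQS α) :
    ∑ x : α, (S.NDpairs.filter fun p => x ∈ p).card = 2 * S.NDpairs.card := by
  have h1 : ∀ x : α, (S.NDpairs.filter fun p => x ∈ p).card
      = ∑ p ∈ S.NDpairs, if x ∈ p then 1 else 0 := fun x => by rw [Finset.card_filter]
  simp_rw [h1]
  rw [Finset.sum_comm]
  have h2 : ∀ p ∈ S.NDpairs, (∑ x : α, if x ∈ p then 1 else 0) = 2 := by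
    intro p hp
    rw [← Finset.card_filter]
    have : univ.filter (· ∈ p) = p := by ext a; simp
    rw [this, ND_card S hp]
  rw [Finset.sum_congr rfl h2, Finset.sum_const, smul_eq_mul, mul_comm]

lemma noMin (S : NestedSQS α) (hv : Fintype.card α % 12 = 10)
    (hN : 4 * S.NDpairs.card = Fintype.card α * (Fintype.card α - 2)) : False := by
  classical
  set v := Fintype.card α with hvdef
  have hdeg : ∀ x : α, v ≤ 2 * (S.NDpairs.filter fun p => x ∈ p).card := by
    intro x
    have h1 := arc_bound S hv x
    have h2 := degEq S x
    have h3 : ((univ.erase x).filter fun y => ({x, y} : Finset α) ∈ S.NDpairs).card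
        + ((univ.erase x).filter fun y => ({x, y} : Finset α) ∉ S.NDpairs).card
        = v - 1 := by
      rw [Finset.card_filter_add_card_filter_not,
        card_erase_of_mem (mem_univ x), card_univ]
    omega
  have hsum : v * v ≤ ∑ x : α, 2 * (S.NDpairs.filter fun p => x ∈ p).card := by
    calc v * v = ∑ _x : α, v := by rw [Finset.sum_const, card_univ, smul_eq_mul, mul_comm]
    _ ≤ _ := Finset.sum_le_sum (fun x _ => hdeg x)
  rw [← Finset.mul_sum, sumDeg] at hsum
  have hlt : v * (v - 2) < v * v :=
    Nat.mul_lt_mul_of_pos_left (show v - 2 < v by omega) (show 0 < v by omega)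
  omega

/-- If v ≡ 10 (mod 12) there is no minimum uniform nested SQS(v) (one with exactly
(v/2)(v/2-1) ND-pairs, each of multiplicity (v-1)/3); hence a minimum uniform
nested SQS(v) can exist only when v ≡ 4 (mod 12). -/
theorem stmt16 (α : Type*) [DecidableEq α] [Fintype α] (hv : 4 ≤ Fintype.card α) :
    (Fintype.card α % 12 = 10 →
      ¬ ∃ S : NestedSQS α,
        4 * S.NDpairs.card = Fintype.card α * (Fintype.card α - 2) ∧
        ∀ p ∈ S.NDpairs, 3 * S.mult p = Fintype.card α - 1) ∧
    ((∃ S : NestedSQS α,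
        4 * S.NDpairs.card = Fintype.card α * (Fintype.card α - 2) ∧
        ∀ p ∈ S.NDpairs, 3 * S.mult p = Fintype.card α - 1) →
      Fintype.card α % 12 = 4) := by
  constructor
  · rintro hv10 ⟨S, hN, -⟩
    exact noMin S hv10 hN
  · rintro ⟨S, hN, hU⟩
    obtain ⟨x, y, hxy⟩ := Fintype.exists_pair_of_one_lt_card (α := α) (by omega)
    have heven := pairCount S hxy
    obtain ⟨t, htsub, htcard⟩ :=
      Finset.exists_subset_card_eq (s := (univ : Finset α)) (n := 3) (by rw [card_univ]; omega)
    obtain ⟨b, hbB, hbsub⟩ := (S.cover t htcard).exists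
    have hpND : S.pair1 b ∈ S.NDpairs := mem_union_left _ (mem_image_of_mem _ hbB)
    have h3 := hU _ hpND
    have h10 : ¬ (Fintype.card α % 12 = 10) := fun h => noMin S h hN
    omega
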